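/- For n = 2, k = 1, let 𝔢 = ∑_{j=1}^N id^{⊗(j−1)} ⊗ e_{2,1} ⊗ d^{⊗(N−j)} and 𝔣 = ∑_{j=1}^N d^{⊗(j−1)} ⊗ e_{1,2} ⊗ id^{⊗(N−j)} on (ℂ²)^{⊗N}, where d = id − 2e_{2,2}. Then 𝔢ᵀ = 𝔥 𝔣 where 𝔥 = d^{⊗N}, and consequently for vectors a, b ∈ (ℂ²)^{⊗N} with real entries, ⟨𝔢 a, b⟩ = ⟨a, 𝔥𝔣 b⟩ in the standard inner product. -/

import Mathlib

open Matrix BigOperators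

noncomputable section

def E2 (x y : Fin 2) : Matrix (Fin 2) (Fin 2) ℂ := Matrix.single x y 1

/-- `d = id − 2 e_{2,2}` (`0`-indexed: `e_{2,2}` is `E2 1 1`). -/
def dmat : Matrix (Fin 2) (Fin 2) ℂ := 1 - (2 : ℂ) • E2 1 1

def kronN (N : ℕ) (A : Fin N → Matrix (Fin 2) (Fin 2) ℂ) :
    Matrix (Fin N → Fin 2) (Fin N → Fin 2) ℂ :=
  Matrix.of fun f g => ∏ i : Fin N, A i (f i) (g i)

/-- `𝔢 = ∑_{j=1}^N id^{⊗(j−1)} ⊗ e_{2,1} ⊗ d^{⊗(N−j)}`. -/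
def eOp (N : ℕ) : Matrix (Fin N → Fin 2) (Fin N → Fin 2) ℂ :=
  ∑ j : Fin N, kronN N (fun i => if i < j then 1 else if i = j then E2 1 0 else dmat)

/-- `𝔣 = ∑_{j=1}^N d^{⊗(j−1)} ⊗ e_{1,2} ⊗ id^{⊗(N−j)}`. -/
def fOp (N : ℕ) : Matrix (Fin N → Fin 2) (Fin N → Fin 2) ℂ :=
  ∑ j : Fin N, kronN N (fun i => if i < j then dmat else if i = j then E2 0 1 else 1)

/-- `𝔥 = d^{⊗N}`. -/
def hOp (N : ℕ) : Matrix (Fin N → Fin 2) (Fin N → Fin 2) ℂ := kronN N (fun _ => dmat)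

/-! Both sides are sums over `j` of Kronecker products, and `kronN` turns transposes and
products into factorwise ones. So `𝔢ᵀ = 𝔥 𝔣` reduces, summand by summand and factor by factor,
to the three `2 × 2` identities `idᵀ = d d`, `e₂₁ᵀ = d e₁₂` and `dᵀ = d id`; the first uses
`d² = id`. The pairing identity is then `⟨A a, b⟩ = ⟨a, Aᵀ b⟩`. -/

theorem kronN_transpose (N : ℕ) (A : Fin N → Matrix (Fin 2) (Fin 2) ℂ) :
    (kronN N A)ᵀ = kronN N fun i => (A i)ᵀ := by
  ext f g
  simp [kronN]

theorem kronN_mul_kronN (N : ℕ) (A B : Fin N → Matrix (Fin 2) (Fin 2) ℂ) :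
    kronN N A * kronN N B = kronN N fun i => A i * B i := by
  ext f h
  simp only [kronN, mul_apply, of_apply, Fintype.prod_sum, Finset.prod_mul_distrib]

theorem transpose_one_eq_dmat_mul_dmat : (1 : Matrix (Fin 2) (Fin 2) ℂ)ᵀ = dmat * dmat := by
  ext x y
  fin_cases x <;> fin_cases y <;> norm_num [dmat, E2, mul_apply, Fin.sum_univ_two, one_apply]

theorem transpose_E2_one_zero : (E2 1 0)ᵀ = dmat * E2 0 1 := by
  ext x y
  fin_cases x <;> fin_cases y <;> norm_num [dmat, E2, mul_apply, Fin.sum_univ_two, one_apply]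

theorem transpose_dmat : dmatᵀ = dmat * 1 := by
  ext x y
  fin_cases x <;> fin_cases y <;> norm_num [dmat, E2, one_apply]

theorem mulVec_dotProduct_eq_dotProduct_transpose_mulVec {m n R : Type*} [Fintype m] [Fintype n]
    [CommSemiring R] (A : Matrix m n R) (a : n → R) (b : m → R) :
    A *ᵥ a ⬝ᵥ b = a ⬝ᵥ Aᵀ *ᵥ b := by
  rw [mulVec_transpose, dotProduct_comm, dotProduct_mulVec, dotProduct_comm]

theorem stmt16 (N : ℕ) :
    (eOp N)ᵀ = hOp N * fOp N
    ∧ ∀ a b : (Fin N → Fin 2) → ℂ,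
        (∀ i, (a i).im = 0) → (∀ i, (b i).im = 0) →
        dotProduct ((eOp N).mulVec a) b = dotProduct a ((hOp N * fOp N).mulVec b) := by
  have transpose_eOp : (eOp N)ᵀ = hOp N * fOp N := by
    simp only [eOp, fOp, hOp, transpose_sum, Matrix.mul_sum, kronN_transpose, kronN_mul_kronN]
    refine Finset.sum_congr rfl fun j _ => congrArg _ (funext fun i => ?_)
    split_ifs
    exacts [transpose_one_eq_dmat_mul_dmat, transpose_E2_one_zero, transpose_dmat]
  refine ⟨transpose_eOp, fun a b _ _ => ?_⟩
  rw [← transpose_eOp, mulVec_dotProduct_eq_dotProduct_transpose_mulVec]
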